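/- For k ≥ 2, the number of minimal paths (with ordered endpoints identified with their reverses) in G_k is at least k!/2. -/

import Mathlib

open Classical in
/-- Vertex type of the bipartite graph `G k`: `V1 = Fin k` plus `V2` = unordered
pairs of distinct elements of `V1`. -/
abbrev GVert (k : ℕ) := Fin k ⊕ {p : Sym2 (Fin k) // ¬ p.IsDiag}

/-- The bipartite graph `G k`: `a ∈ V1` is adjacent to `p ∈ V2` iff `a ∈ p`. -/
def biG (k : ℕ) : SimpleGraph (GVert k) where
  Adj x y := ∃ (a : Fin k) (p : {p : Sym2 (Fin k) // ¬ p.IsDiag}),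
    a ∈ p.val ∧ ((x = Sum.inl a ∧ y = Sum.inr p) ∨ (x = Sum.inr p ∧ y = Sum.inl a))
  symm := by refine ⟨?_⟩; rintro x y ⟨a, p, hm, (⟨rfl, rfl⟩ | ⟨rfl, rfl⟩)⟩ <;> exact ⟨a, p, hm, by tauto⟩
  loopless := by refine ⟨?_⟩; rintro x ⟨a, p, hm, (⟨rfl, h⟩ | ⟨rfl, h⟩)⟩ <;> simp_all

/-- The `V2`-vertex `{a,b}` (junk value `inl a` if `a = b`). -/
def pairV {k : ℕ} (a b : Fin k) : GVert k :=
  if h : a = b then Sum.inl a else Sum.inr ⟨s(a, b), by simp [h]⟩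

/-- The alternating list of vertices `a₁, {a₁,a₂}, a₂, …` associated to a list in `V1`. -/
def altList {k : ℕ} : List (Fin k) → List (GVert k)
  | [] => []
  | [a] => [Sum.inl a]
  | a :: b :: rest => Sum.inl a :: pairV a b :: altList (b :: rest)

/-- The alternating path associated to a permutation of `Fin k`. -/
def permPath {k : ℕ} (σ : Equiv.Perm (Fin k)) : List (GVert k) :=
  altList ((List.finRange k).map σ)

/-- `L` is a path: consecutive vertices adjacent and no repeats. -/
def IsPathList {V : Type*} (G : SimpleGraph V) (L : List V) : Prop :=
  List.Chain' G.Adj L ∧ L.Nodup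

/-- `L` is a minimal path: no proper subsequence with the same endpoints is a path. -/
def IsMinimalPath {V : Type*} (G : SimpleGraph V) (L : List V) : Prop :=
  IsPathList G L ∧ ∀ L' : List V, L'.Sublist L → L'.head? = L.head? →
    L'.getLast? = L.getLast? → IsPathList G L' → L' = L

/-!
The alternating path `a₁, {a₁,a₂}, a₂, …, {a_{k-1},a_k}, a_k` of a permutation is chordless: a
vertex `a_i` meets no later pair other than `{a_i,a_{i+1}}`, and `{a_i,a_{i+1}}` meets no later
`V1`-vertex other than `a_{i+1}`. A chordless path is minimal, because a subsequence that is a path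
with the same first vertex is forced, vertex by vertex, to follow the original path. Distinct
permutations give distinct paths, and the map `L ↦ {L, L.reverse}` is at most two-to-one, so there
are at least `k!/2` classes.
-/

open Finset in
theorem Set.ncard_le_two_mul_ncard_image_pair {β : Type*} (r : β → β) {S : Set β}
    (hS : S.Finite) : S.ncard ≤ 2 * ((fun x => ({x, r x} : Set β)) '' S).ncard := by
  classical
  lift S to Finset β using hS
  rw [Set.ncard_coe_finset, ← Finset.coe_image, Set.ncard_coe_finset]
  refine card_le_mul_card_image S 2 fun P hP => ?_
  obtain ⟨y, -, rfl⟩ := Finset.mem_image.mp hP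
  calc #(S.filter fun x => ({x, r x} : Set β) = {y, r y}) ≤ #({y, r y} : Finset β) := by
        refine Finset.card_le_card fun x hx => ?_
        have hx : x ∈ ({y, r y} : Set β) := (Finset.mem_filter.mp hx).2 ▸ Set.mem_insert x _
        simpa using hx
    _ ≤ 2 := Finset.card_le_two

section MinimalPath

variable {V : Type*} {G : SimpleGraph V}

def IsChordless (G : SimpleGraph V) : List V → Prop
  | [] => True
  | x :: rest => (∀ z ∈ rest, G.Adj x z → rest.head? = some z) ∧ IsChordless G rest

theorem eq_of_sublist_of_isChordless {L : List V} (hL : L.Nodup) (hc : IsChordless G L)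
    {L' : List V} (hsub : L'.Sublist L) (hhead : L'.head? = L.head?)
    (hlast : L'.getLast? = L.getLast?) (hchain : List.IsChain G.Adj L') : L' = L := by
  induction L generalizing L' with
  | nil => exact List.sublist_nil.mp hsub
  | cons x rest ih =>
    obtain ⟨y, T, rfl⟩ : ∃ y T, L' = y :: T :=
      List.exists_cons_of_ne_nil (by rintro rfl; simp at hhead)
    obtain rfl : x = y := by simpa using hhead.symm
    have hT : T.Sublist rest := List.cons_sublist_cons.mp hsub
    have hx : x ∉ rest := (List.nodup_cons.mp hL).1
    rcases T with _ | ⟨u, T⟩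
    · rcases rest with _ | ⟨v, rest⟩
      · rfl
      · rw [List.getLast?_cons_cons] at hlast
        exact absurd (List.mem_of_getLast? hlast.symm) hx
    · obtain ⟨rest', rfl⟩ : ∃ rest', rest = u :: rest' := by
        have := hc.1 u (hT.subset List.mem_cons_self) (List.isChain_cons_cons.mp hchain).1
        cases rest <;> simp_all
      rw [ih (List.nodup_cons.mp hL).2 hc.2 hT rfl (by simpa using hlast) hchain.tail]

theorem IsPathList.isMinimalPath {L : List V} (hL : IsPathList G L) (hc : IsChordless G L) :
    IsMinimalPath G L :=
  ⟨hL, fun _ hsub hhead hlast hpath =>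
    eq_of_sublist_of_isChordless hL.2 hc hsub hhead hlast hpath.1⟩

theorem finite_setOf_isMinimalPath [Finite V] : {L : List V | IsMinimalPath G L}.Finite := by
  have := Fintype.ofFinite V
  exact (List.finite_length_le V (Fintype.card V)).subset fun _ hL => hL.1.2.length_le_card

end MinimalPath

section BipartitePairGraph

variable {k : ℕ}

@[simp]
theorem biG_adj_inl_inr {a : Fin k} {p : {p : Sym2 (Fin k) // ¬ p.IsDiag}} :
    (biG k).Adj (Sum.inl a) (Sum.inr p) ↔ a ∈ p.1 := by
  refine ⟨?_, fun h => ⟨a, p, h, .inl ⟨rfl, rfl⟩⟩⟩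
  rintro ⟨a', p', hm, ⟨h₁, h₂⟩ | ⟨h₁, -⟩⟩
  · cases h₁; cases h₂; exact hm
  · cases h₁

@[simp]
theorem biG_adj_inr_inl {a : Fin k} {p : {p : Sym2 (Fin k) // ¬ p.IsDiag}} :
    (biG k).Adj (Sum.inr p) (Sum.inl a) ↔ a ∈ p.1 := by
  rw [SimpleGraph.adj_comm, biG_adj_inl_inr]

@[simp]
theorem not_biG_adj_inl_inl {a b : Fin k} : ¬ (biG k).Adj (Sum.inl a) (Sum.inl b) := by
  simp [biG]

@[simp]
theorem not_biG_adj_inr_inr {p q : {p : Sym2 (Fin k) // ¬ p.IsDiag}} :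
    ¬ (biG k).Adj (Sum.inr p) (Sum.inr q) := by
  simp [biG]

theorem biG_adj_pairV_inl {a b c : Fin k} :
    (biG k).Adj (pairV a b) (Sum.inl c) ↔ a ≠ b ∧ (c = a ∨ c = b) := by
  unfold pairV
  split_ifs with h <;> simp [h, eq_comm]

theorem biG_adj_inl_pairV {a b c : Fin k} :
    (biG k).Adj (Sum.inl c) (pairV a b) ↔ a ≠ b ∧ (c = a ∨ c = b) := by
  rw [SimpleGraph.adj_comm, biG_adj_pairV_inl]

theorem exists_altList_cons_eq (a : Fin k) (as : List (Fin k)) :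
    ∃ t, altList (a :: as) = Sum.inl a :: t := by
  cases as <;> exact ⟨_, rfl⟩

theorem mem_of_inl_mem_altList {as : List (Fin k)} {c : Fin k} (h : Sum.inl c ∈ altList as) :
    c ∈ as := by
  induction as using altList.induct with
  | case1 => simp [altList] at h
  | case2 a => simp_all [altList]
  | case3 a b rest ih =>
    simp only [altList, List.mem_cons] at h
    rcases h with h | h | h
    · simp_all
    · unfold pairV at h; split_ifs at h; simp_all
    · simp [ih h]

theorem mem_of_adj_of_mem_altList {as : List (Fin k)} {x : GVert k} {c : Fin k}
    (hx : x ∈ altList as) (hadj : (biG k).Adj x (Sum.inl c)) : c ∈ as := by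
  induction as using altList.induct with
  | case1 => simp [altList] at hx
  | case2 a => simp_all [altList]
  | case3 a b rest ih =>
    simp only [altList, List.mem_cons] at hx
    rcases hx with rfl | rfl | hx
    · simp at hadj
    · rcases (biG_adj_pairV_inl.mp hadj).2 with rfl | rfl <;> simp
    · simp [ih hx]

theorem isChain_altList {as : List (Fin k)} (h : as.Nodup) : (altList as).IsChain (biG k).Adj := by
  induction as using altList.induct with
  | case1 => exact List.isChain_nil
  | case2 a => exact List.isChain_singleton _
  | case3 a b rest ih =>
    have hab : a ≠ b := by simp_all
    obtain ⟨t, ht⟩ := exists_altList_cons_eq b rest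
    have ih := ih h.of_cons
    rw [altList, ht] at *
    exact .cons_cons (biG_adj_inl_pairV.mpr ⟨hab, .inl rfl⟩)
      (.cons_cons (biG_adj_pairV_inl.mpr ⟨hab, .inr rfl⟩) ih)

theorem nodup_altList {as : List (Fin k)} (h : as.Nodup) : (altList as).Nodup := by
  induction as using altList.induct with
  | case1 => simp [altList]
  | case2 a => simp [altList]
  | case3 a b rest ih =>
    have ha : a ∉ b :: rest := (List.nodup_cons.mp h).1
    have hab : a ≠ b := by simp_all
    rw [altList]
    refine List.nodup_cons.mpr ⟨?_, List.nodup_cons.mpr ⟨?_, ih h.of_cons⟩⟩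
    · simp only [List.mem_cons, not_or]
      exact ⟨by simp [pairV, hab], fun hmem => ha (mem_of_inl_mem_altList hmem)⟩
    · exact fun hmem =>
        ha (mem_of_adj_of_mem_altList hmem (biG_adj_pairV_inl.mpr ⟨hab, .inl rfl⟩))

theorem isChordless_altList {as : List (Fin k)} (h : as.Nodup) :
    IsChordless (biG k) (altList as) := by
  induction as using altList.induct with
  | case1 => trivial
  | case2 a => simp [altList, IsChordless]
  | case3 a b rest ih =>
    have ha : a ∉ b :: rest := (List.nodup_cons.mp h).1
    have hab : a ≠ b := by simp_all
    obtain ⟨t, ht⟩ := exists_altList_cons_eq b rest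
    rw [altList]
    refine ⟨fun z hz hadj => ?_, fun z hz hadj => ?_, ih h.of_cons⟩
    · rcases List.mem_cons.mp hz with rfl | hz
      · rfl
      · exact absurd (mem_of_adj_of_mem_altList hz hadj.symm) ha
    · rcases z with c | p
      · have hc := mem_of_inl_mem_altList hz
        obtain rfl : c = b := by
          rcases (biG_adj_pairV_inl.mp hadj).2 with rfl | rfl
          exacts [absurd hc ha, rfl]
        simp [ht]
      · simp [pairV, hab] at hadj

theorem filterMap_getLeft?_altList {as : List (Fin k)} (h : as.Nodup) :
    (altList as).filterMap Sum.getLeft? = as := by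
  induction as using altList.induct with
  | case1 => simp [altList]
  | case2 a => simp [altList]
  | case3 a b rest ih =>
    have hab : a ≠ b := by simp_all
    simp only [altList, pairV, dif_neg hab, List.filterMap_cons, Sum.getLeft?_inl, Sum.getLeft?_inr]
    rw [ih h.of_cons]

theorem permPath_eq_altList_ofFn (σ : Equiv.Perm (Fin k)) :
    permPath σ = altList (List.ofFn σ) := by
  rw [permPath, List.ofFn_eq_map]

theorem permPath_injective : Function.Injective (permPath (k := k)) := by
  intro σ τ h
  have hofFn : List.ofFn σ = List.ofFn τ := by
    simpa [permPath_eq_altList_ofFn, filterMap_getLeft?_altList, List.nodup_ofFn, Equiv.injective]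
      using congrArg (List.filterMap Sum.getLeft?) h
  exact Equiv.ext (congrFun (List.ofFn_injective hofFn))

theorem isMinimalPath_permPath (σ : Equiv.Perm (Fin k)) : IsMinimalPath (biG k) (permPath σ) := by
  have hσ : (List.ofFn σ).Nodup := List.nodup_ofFn.mpr σ.injective
  rw [permPath_eq_altList_ofFn]
  exact IsPathList.isMinimalPath ⟨isChain_altList hσ, nodup_altList hσ⟩
    (isChordless_altList hσ)

end BipartitePairGraph

theorem stmt6_general (k : ℕ) :
    k.factorial / 2 ≤
      Set.ncard ((fun L => ({L, L.reverse} : Set (List (GVert k)))) ''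
        {L : List (GVert k) | IsMinimalPath (biG k) L}) := by
  have hperm : k.factorial ≤ {L | IsMinimalPath (biG k) L}.ncard :=
    calc k.factorial = (Set.range (permPath (k := k))).ncard := by
          rw [Set.ncard_range_of_injective permPath_injective, Nat.card_perm, Nat.card_fin]
      _ ≤ _ := Set.ncard_le_ncard (Set.range_subset_iff.mpr isMinimalPath_permPath)
          finite_setOf_isMinimalPath
  exact Nat.div_le_of_le_mul
    (hperm.trans (Set.ncard_le_two_mul_ncard_image_pair List.reverse finite_setOf_isMinimalPath))

theorem stmt6 (k : ℕ) (hk : 2 ≤ k) :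
    k.factorial / 2 ≤
      Set.ncard ((fun L => ({L, L.reverse} : Set (List (GVert k)))) ''
        {L : List (GVert k) | IsMinimalPath (biG k) L}) :=
  stmt6_general k
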